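/- Nishimori gauge identity for a triple product of correlations: for every pair of bonds b, b' ∈ B, [⟨S_b⟩⟨S_{b'}⟩] = [⟨S_b⟩⟨S_{b'}⟩⟨S_b S_{b'}⟩]. -/

import Mathlib

open MeasureTheory ProbabilityTheory Filter

noncomputable section

/-- The real value ±1 of a Boolean spin. -/
def spin (s : Bool) : ℝ := if s then 1 else -1

/-- The bond spin `S_b = S_n S_{n'}` for a bond `b` with endpoints `ep b = (n, n')`. -/
def bondSpin {V ι : Type*} (ep : ι → V × V) (S : V → Bool) (b : ι) : ℝ :=
  spin (S (ep b).1) * spin (S (ep b).2)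

/-- The potential `U(j, S) = Σ_b x_b j_b S_b`. -/
def potential {V ι : Type*} [Fintype ι] (ep : ι → V × V) (x j : ι → ℝ)
    (S : V → Bool) : ℝ :=
  ∑ b, x b * j b * bondSpin ep S b

/-- The partition function `Z(j) = Σ_S exp U(j,S)`. -/
def partitionFn {V ι : Type*} [Fintype V] [DecidableEq V] [Fintype ι]
    (ep : ι → V × V) (x j : ι → ℝ) : ℝ :=
  ∑ S : V → Bool, Real.exp (potential ep x j S)

/-- The Boltzmann–Gibbs expectation `⟨f⟩` at fixed disorder `j`. -/
def gibbs {V ι : Type*} [Fintype V] [DecidableEq V] [Fintype ι]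
    (ep : ι → V × V) (x j : ι → ℝ) (f : (V → Bool) → ℝ) : ℝ :=
  (∑ S : V → Bool, f S * Real.exp (potential ep x j S)) / partitionFn ep x j

/-- The law of the couplings: independent Gaussians, `j_b` of mean `x_b` and variance 1. -/
def couplings {ι : Type*} [Fintype ι] (x : ι → ℝ) : Measure (ι → ℝ) :=
  Measure.pi fun b => gaussianReal (x b) 1

/-- The quenched average `[F]`. -/
def quenched {ι : Type*} [Fintype ι] (x : ι → ℝ) (F : (ι → ℝ) → ℝ) : ℝ :=
  ∫ j, F j ∂(couplings x)

/-- The quenched pressure `P({x}) = [ln Z]`. -/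
def pressure {V ι : Type*} [Fintype V] [DecidableEq V] [Fintype ι]
    (ep : ι → V × V) (x : ι → ℝ) : ℝ :=
  quenched x fun j => Real.log (partitionFn ep x j)

/-!
Nishimori's gauge argument. For `τ : V → Bool`, flipping the couplings to `τ_b j_b` while
flipping the spins to `Sτ` leaves the Hamiltonian invariant, so the Gibbs state at the flipped
couplings is the original one transported by `S ↦ Sτ`. The flip maps the Gaussian law of mean
`x` to that of mean `τx`, and since `(τ_b x_b)² = x_b²` the latter has density
`exp (U(j, τ) - Σ_b x_b j_b)` with respect to the former. Averaging over all gauges,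
`2^|V| [F] = [e^{-Σ x_b j_b} Σ_τ F(τj) e^{U(j,τ)}]`. For `F = ⟨S_b⟩⟨S_b'⟩` one has
`F(τj) = τ_b τ_b' F(j)`, so the gauge sum is `F Z ⟨S_b S_b'⟩`; the gauge-invariant
`F ⟨S_b S_b'⟩` has gauge sum `F ⟨S_b S_b'⟩ Z` as well.
-/

open scoped ENNReal NNReal

namespace MeasureTheory

theorem lintegral_fin_nat_prod_eq_prod {n : ℕ} {E : Fin n → Type*} [∀ i, MeasurableSpace (E i)]
    (μ : ∀ i, Measure (E i)) [∀ i, SigmaFinite (μ i)] {f : (i : Fin n) → E i → ℝ≥0∞}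
    (hf : ∀ i, Measurable (f i)) :
    ∫⁻ x, ∏ i, f i (x i) ∂Measure.pi μ = ∏ i, ∫⁻ x, f i x ∂μ i := by
  induction n with
  | zero => simp
  | succ n ih =>
    calc ∫⁻ x, ∏ i, f i (x i) ∂Measure.pi μ
        = ∫⁻ p : E 0 × ((i : Fin n) → E i.succ), f 0 p.1 * ∏ i : Fin n, f i.succ (p.2 i)
            ∂(μ 0).prod (Measure.pi fun i => μ i.succ) := by
          rw [← (measurePreserving_piFinSuccAbove μ 0).symm.lintegral_comp_emb
            (MeasurableEquiv.measurableEmbedding _)]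
          simp_rw [MeasurableEquiv.piFinSuccAbove_symm_apply, Fin.insertNthEquiv,
            Fin.prod_univ_succ, Fin.insertNth_zero, Equiv.coe_fn_mk, Fin.cons_zero,
            Fin.zero_succAbove, Fin.cons_succ]
          rfl
      _ = (∫⁻ x, f 0 x ∂μ 0) * ∏ i : Fin n, ∫⁻ x, f i.succ x ∂μ i.succ := by
          rw [lintegral_prod_mul (f := f 0)
              (g := fun (y : (i : Fin n) → E i.succ) => ∏ i : Fin n, f i.succ (y i))
              (hf 0).aemeasurable (Finset.measurable_prod _ fun i _ =>
                (hf i.succ).comp (measurable_pi_apply i)).aemeasurable,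
            ih _ fun i => hf i.succ]
      _ = ∏ i, ∫⁻ x, f i x ∂μ i := (Fin.prod_univ_succ fun i => ∫⁻ x, f i x ∂μ i).symm

theorem lintegral_fintype_prod_eq_prod {ι : Type*} [Fintype ι] {E : ι → Type*}
    [∀ i, MeasurableSpace (E i)] (μ : ∀ i, Measure (E i)) [∀ i, SigmaFinite (μ i)]
    {f : (i : ι) → E i → ℝ≥0∞} (hf : ∀ i, Measurable (f i)) :
    ∫⁻ x, ∏ i, f i (x i) ∂Measure.pi μ = ∏ i, ∫⁻ x, f i x ∂μ i := by
  let e := (Fintype.equivFin ι).symm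
  rw [← (measurePreserving_piCongrLeft μ e).lintegral_comp_emb
    (MeasurableEquiv.measurableEmbedding _)]
  simp_rw [← e.prod_comp, MeasurableEquiv.coe_piCongrLeft, Equiv.piCongrLeft_apply_apply]
  exact lintegral_fin_nat_prod_eq_prod (fun k => μ (e k)) fun k => hf (e k)

theorem Measure.pi_withDensity {ι : Type*} [Fintype ι] {E : ι → Type*}
    [∀ i, MeasurableSpace (E i)] (μ : ∀ i, Measure (E i)) [∀ i, SigmaFinite (μ i)]
    {f : (i : ι) → E i → ℝ≥0∞} (hf : ∀ i, Measurable (f i))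
    [∀ i, SigmaFinite ((μ i).withDensity (f i))] :
    Measure.pi (fun i => (μ i).withDensity (f i)) =
      (Measure.pi μ).withDensity fun x => ∏ i, f i (x i) := by
  refine Measure.pi_eq (μ := fun i => (μ i).withDensity (f i)) fun s hs => ?_
  have hind : (Set.univ.pi s).indicator (fun x => ∏ i, f i (x i)) =
      fun x => ∏ i, (s i).indicator (f i) (x i) := by
    funext x
    by_cases hx : x ∈ Set.univ.pi s
    · simp only [Set.indicator_of_mem hx, Set.indicator_of_mem (hx _ (Set.mem_univ _))]
    · obtain ⟨i, hi⟩ : ∃ i, x i ∉ s i := by simpa [Set.mem_univ_pi] using hx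
      rw [Set.indicator_of_notMem hx, Finset.prod_eq_zero (Finset.mem_univ i)
        (Set.indicator_of_notMem hi _)]
  rw [withDensity_apply _ (MeasurableSet.univ_pi hs),
    ← lintegral_indicator (MeasurableSet.univ_pi hs), hind,
    lintegral_fintype_prod_eq_prod μ fun i => (hf i).indicator (hs i)]
  simp_rw [withDensity_apply _ (hs _), lintegral_indicator (hs _)]

theorem measurableEmbedding_pi_const_mul {ι : Type*} {ε : ι → ℝ} (hε : ∀ c, ε c ≠ 0) :
    MeasurableEmbedding fun (j : ι → ℝ) c => ε c * j c :=
  (MeasurableEquiv.piCongrRight fun c => MeasurableEquiv.mulLeft₀ (ε c) (hε c)).measurableEmbedding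

end MeasureTheory

open Real

namespace ProbabilityTheory

theorem gaussianPDFReal_eq_mul_exp_of_sq_eq {m m' : ℝ} (h : m' ^ 2 = m ^ 2) (v : ℝ≥0) (y : ℝ) :
    gaussianPDFReal m' v y = gaussianPDFReal m v y * exp ((m' - m) * y / v) := by
  rw [gaussianPDFReal, gaussianPDFReal, mul_assoc _ (exp _), ← exp_add]
  congr 2
  linear_combination (-h / (2 * v))

theorem gaussianReal_eq_withDensity_of_sq_eq {m m' : ℝ} (h : m' ^ 2 = m ^ 2) {v : ℝ≥0}
    (hv : v ≠ 0) :
    gaussianReal m' v =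
      (gaussianReal m v).withDensity fun y => ENNReal.ofReal (exp ((m' - m) * y / v)) := by
  rw [gaussianReal_of_var_ne_zero _ hv, gaussianReal_of_var_ne_zero _ hv,
    ← withDensity_mul _ (measurable_gaussianPDF _ _) (by fun_prop)]
  congr 1
  funext y
  simp only [gaussianPDF, Pi.mul_apply, ← ENNReal.ofReal_mul (gaussianPDFReal_nonneg _ _ _),
    gaussianPDFReal_eq_mul_exp_of_sq_eq h]

end ProbabilityTheory

section Couplings

variable {ι : Type*} [Fintype ι]

theorem couplings_eq_withDensity {x x' : ι → ℝ} (h : ∀ c, x' c ^ 2 = x c ^ 2) :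
    couplings x' =
      (couplings x).withDensity fun j => ENNReal.ofReal (exp (∑ c, (x' c - x c) * j c)) := by
  have hg (c : ι) := gaussianReal_eq_withDensity_of_sq_eq (h c) one_ne_zero
  have (c : ι) : SigmaFinite ((gaussianReal (x c) 1).withDensity
      fun y => ENNReal.ofReal (exp ((x' c - x c) * y / (1 : ℝ≥0)))) := by
    rw [← hg c]; infer_instance
  rw [couplings, couplings, funext hg, Measure.pi_withDensity _ fun c => by fun_prop]
  congr 1
  funext j
  rw [exp_sum, ENNReal.ofReal_prod_of_nonneg fun c _ => (exp_pos _).le]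
  simp

theorem integral_couplings_eq_of_sq_eq {x x' : ι → ℝ} (h : ∀ c, x' c ^ 2 = x c ^ 2)
    (F : (ι → ℝ) → ℝ) :
    ∫ j, F j ∂couplings x' = ∫ j, F j * exp (∑ c, (x' c - x c) * j c) ∂couplings x := by
  rw [couplings_eq_withDensity h, integral_withDensity_eq_integral_toReal_smul (by fun_prop)
    (ae_of_all _ fun _ => ENNReal.ofReal_lt_top)]
  simp [ENNReal.toReal_ofReal (exp_pos _).le, mul_comm]

theorem integrable_couplings_iff_of_sq_eq {x x' : ι → ℝ} (h : ∀ c, x' c ^ 2 = x c ^ 2)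
    {F : (ι → ℝ) → ℝ} :
    Integrable F (couplings x') ↔
      Integrable (fun j => F j * exp (∑ c, (x' c - x c) * j c)) (couplings x) := by
  rw [couplings_eq_withDensity h, integrable_withDensity_iff (by fun_prop)
    (ae_of_all _ fun _ => ENNReal.ofReal_lt_top)]
  simp [ENNReal.toReal_ofReal (exp_pos _).le]

theorem measurePreserving_couplings_mul {ε : ι → ℝ} (hε : ∀ c, ε c ^ 2 = 1) (x : ι → ℝ) :
    MeasurePreserving (fun j c => ε c * j c) (couplings fun c => ε c * x c) (couplings x) := by
  refine measurePreserving_pi _ _ fun c => ⟨measurable_const_mul _, ?_⟩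
  rw [gaussianReal_map_const_mul]
  congr 1
  · rw [← mul_assoc, ← sq, hε, one_mul]
  · ext
    simp [hε]

instance (x : ι → ℝ) : IsProbabilityMeasure (couplings x) := by
  unfold couplings
  infer_instance

theorem integral_couplings_eq_integral_mul_sign {ε : ι → ℝ} (hε : ∀ c, ε c ^ 2 = 1)
    (x : ι → ℝ) (F : (ι → ℝ) → ℝ) :
    ∫ j, F j ∂couplings x =
      ∫ j, F (fun c => ε c * j c) * exp (∑ c, (ε c * x c - x c) * j c) ∂couplings x := by
  have hε₀ (c : ι) : ε c ≠ 0 := fun h => by simpa [h] using hε c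
  rw [← (measurePreserving_couplings_mul hε x).integral_comp
    (measurableEmbedding_pi_const_mul hε₀), integral_couplings_eq_of_sq_eq]
  intro c
  rw [mul_pow, hε, one_mul]

theorem MeasureTheory.Integrable.comp_mul_sign_mul_exp {ε : ι → ℝ} (hε : ∀ c, ε c ^ 2 = 1)
    {x : ι → ℝ} {F : (ι → ℝ) → ℝ} (hF : Integrable F (couplings x)) :
    Integrable (fun j => F (fun c => ε c * j c) * exp (∑ c, (ε c * x c - x c) * j c))
      (couplings x) := by
  have hε₀ (c : ι) : ε c ≠ 0 := fun h => by simpa [h] using hε c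
  refine (integrable_couplings_iff_of_sq_eq fun c => ?_).1
    (((measurePreserving_couplings_mul hε x).integrable_comp_emb
      (measurableEmbedding_pi_const_mul hε₀)).2 hF)
  rw [mul_pow, hε, one_mul]

end Couplings

section Gibbs

variable {V ι : Type*} [Fintype V] [DecidableEq V] [Fintype ι]

theorem partitionFn_pos (ep : ι → V × V) (x j : ι → ℝ) : 0 < partitionFn ep x j :=
  Finset.sum_pos (fun _ _ => exp_pos _) Finset.univ_nonempty

theorem gibbs_mul_partitionFn (ep : ι → V × V) (x j : ι → ℝ) (f : (V → Bool) → ℝ) :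
    gibbs ep x j f * partitionFn ep x j = ∑ S, f S * exp (potential ep x j S) :=
  div_mul_cancel₀ _ (partitionFn_pos ep x j).ne'

theorem gibbs_const_mul (ep : ι → V × V) (x j : ι → ℝ) (a : ℝ) (f : (V → Bool) → ℝ) :
    gibbs ep x j (fun S => a * f S) = a * gibbs ep x j f := by
  simp only [gibbs, mul_assoc, ← Finset.mul_sum, mul_div_assoc]

theorem gibbs_const (ep : ι → V × V) (x j : ι → ℝ) (a : ℝ) : gibbs ep x j (fun _ => a) = a := by
  rw [gibbs, ← Finset.mul_sum, ← partitionFn, mul_div_assoc,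
    div_self (partitionFn_pos ep x j).ne', mul_one]

theorem abs_gibbs_le (ep : ι → V × V) (x j : ι → ℝ) {f : (V → Bool) → ℝ} {C : ℝ}
    (hf : ∀ S, |f S| ≤ C) : |gibbs ep x j f| ≤ C := by
  have hZ := partitionFn_pos ep x j
  rw [gibbs, abs_div, abs_of_pos hZ, div_le_iff₀ hZ, partitionFn, Finset.mul_sum]
  refine (Finset.abs_sum_le_sum_abs _ _).trans (Finset.sum_le_sum fun S _ => ?_)
  rw [abs_mul, abs_of_pos (exp_pos _)]
  exact mul_le_mul_of_nonneg_right (hf S) (exp_pos _).le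

theorem abs_gibbs_le_sum_abs (ep : ι → V × V) (x j : ι → ℝ) (f : (V → Bool) → ℝ) :
    |gibbs ep x j f| ≤ ∑ S, |f S| :=
  abs_gibbs_le ep x j fun S =>
    Finset.single_le_sum (f := fun S => |f S|) (fun _ _ => abs_nonneg _) (Finset.mem_univ S)

theorem continuous_gibbs (ep : ι → V × V) (x : ι → ℝ) (f : (V → Bool) → ℝ) :
    Continuous fun j => gibbs ep x j f := by
  have hU (S : V → Bool) : Continuous fun j => potential ep x j S := by
    unfold potential
    fun_prop
  exact (continuous_finsetSum _ fun S _ => continuous_const.mul (hU S).rexp).div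
    (continuous_finsetSum _ fun S _ => (hU S).rexp) fun j => (partitionFn_pos ep x j).ne'

theorem integrable_gibbs (ep : ι → V × V) (x : ι → ℝ) (f : (V → Bool) → ℝ)
    (μ : Measure (ι → ℝ)) [IsFiniteMeasure μ] : Integrable (fun j => gibbs ep x j f) μ :=
  .of_bound (continuous_gibbs ep x f).aestronglyMeasurable _ <|
    ae_of_all _ fun j => abs_gibbs_le_sum_abs ep x j f

theorem MeasureTheory.Integrable.mul_gibbs {μ : Measure (ι → ℝ)} {F : (ι → ℝ) → ℝ}
    (hF : Integrable F μ) (ep : ι → V × V) (x : ι → ℝ) (f : (V → Bool) → ℝ) :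
    Integrable (fun j => F j * gibbs ep x j f) μ :=
  hF.mul_bdd (continuous_gibbs ep x f).aestronglyMeasurable <|
    ae_of_all _ fun j => abs_gibbs_le_sum_abs ep x j f

end Gibbs

section Gauge

variable {V ι : Type*}

theorem spin_beq (a c : Bool) : spin (a == c) = spin a * spin c := by
  cases a <;> cases c <;> norm_num [spin]

theorem spin_sq (s : Bool) : spin s ^ 2 = 1 := by
  cases s <;> simp [spin]

theorem bondSpin_sq (ep : ι → V × V) (S : V → Bool) (c : ι) : bondSpin ep S c ^ 2 = 1 := by
  rw [bondSpin, mul_pow, spin_sq, spin_sq, one_mul]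

/-- Since `spin (a == c) = spin a * spin c`, this is the gauge transformation `S ↦ Sτ`. -/
def gaugeSpins (τ : V → Bool) : Equiv.Perm (V → Bool) :=
  Function.Involutive.toPerm (fun S n => S n == τ n) fun S => by
    funext n
    show ((S n == τ n) == τ n) = S n
    cases S n <;> cases τ n <;> rfl

theorem gaugeSpins_apply (τ S : V → Bool) (n : V) : gaugeSpins τ S n = (S n == τ n) := rfl

theorem gaugeSpins_gaugeSpins (τ S : V → Bool) : gaugeSpins τ (gaugeSpins τ S) = S :=
  Function.Involutive.toPerm_involutive _ S

def gaugeCouplings (ep : ι → V × V) (τ : V → Bool) (j : ι → ℝ) : ι → ℝ :=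
  fun c => bondSpin ep τ c * j c

theorem bondSpin_gaugeSpins (ep : ι → V × V) (τ S : V → Bool) (c : ι) :
    bondSpin ep (gaugeSpins τ S) c = bondSpin ep S c * bondSpin ep τ c := by
  simp only [bondSpin, gaugeSpins_apply, spin_beq]
  ring

variable [Fintype ι]

theorem potential_gaugeCouplings (ep : ι → V × V) (x j : ι → ℝ) (τ S : V → Bool) :
    potential ep x (gaugeCouplings ep τ j) S = potential ep x j (gaugeSpins τ S) := by
  simp only [potential, gaugeCouplings, bondSpin_gaugeSpins]
  exact Finset.sum_congr rfl fun c _ => by ring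

theorem exp_sum_sub_mul_eq_exp_potential_mul (ep : ι → V × V) (x j : ι → ℝ) (τ : V → Bool) :
    exp (∑ c, (bondSpin ep τ c * x c - x c) * j c) =
      exp (potential ep x j τ) * exp (-∑ c, x c * j c) := by
  rw [← exp_add, potential, ← sub_eq_add_neg, ← Finset.sum_sub_distrib]
  exact congrArg exp (Finset.sum_congr rfl fun c _ => by ring)

variable [Fintype V] [DecidableEq V]

theorem partitionFn_gaugeCouplings (ep : ι → V × V) (x j : ι → ℝ) (τ : V → Bool) :
    partitionFn ep x (gaugeCouplings ep τ j) = partitionFn ep x j := by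
  simp only [partitionFn, potential_gaugeCouplings]
  exact Equiv.sum_comp (gaugeSpins τ) fun S => exp (potential ep x j S)

theorem gibbs_gaugeCouplings (ep : ι → V × V) (x j : ι → ℝ) (τ : V → Bool)
    (f : (V → Bool) → ℝ) :
    gibbs ep x (gaugeCouplings ep τ j) f = gibbs ep x j (f ∘ gaugeSpins τ) := by
  simp only [gibbs, partitionFn_gaugeCouplings, potential_gaugeCouplings]
  congr 1
  exact Fintype.sum_equiv (gaugeSpins τ) _ _ fun S => by simp [gaugeSpins_gaugeSpins]

theorem gibbs_gaugeCouplings_of_comp_eq_mul (ep : ι → V × V) (x j : ι → ℝ) {τ : V → Bool}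
    {f : (V → Bool) → ℝ} {a : ℝ} (hf : ∀ S, f (gaugeSpins τ S) = a * f S) :
    gibbs ep x (gaugeCouplings ep τ j) f = a * gibbs ep x j f := by
  rw [gibbs_gaugeCouplings, ← gibbs_const_mul]
  exact congrArg _ (funext hf)

theorem gibbs_bondSpin_gaugeCouplings (ep : ι → V × V) (x j : ι → ℝ) (τ : V → Bool) (c : ι) :
    gibbs ep x (gaugeCouplings ep τ j) (fun S => bondSpin ep S c) =
      bondSpin ep τ c * gibbs ep x j (fun S => bondSpin ep S c) :=
  gibbs_gaugeCouplings_of_comp_eq_mul ep x j fun S => by rw [bondSpin_gaugeSpins, mul_comm]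

end Gauge

section Nishimori

variable {V ι : Type*} [Fintype ι]

theorem quenched_eq_integral_gaugeCouplings (ep : ι → V × V) (x : ι → ℝ) (τ : V → Bool)
    (F : (ι → ℝ) → ℝ) :
    quenched x F = ∫ j, F (gaugeCouplings ep τ j) * exp (potential ep x j τ) *
      exp (-∑ c, x c * j c) ∂couplings x := by
  simp_rw [quenched, integral_couplings_eq_integral_mul_sign (bondSpin_sq ep τ) x F,
    exp_sum_sub_mul_eq_exp_potential_mul, mul_assoc]
  rfl

theorem MeasureTheory.Integrable.comp_gaugeCouplings (ep : ι → V × V) {x : ι → ℝ}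
    (τ : V → Bool) {F : (ι → ℝ) → ℝ} (hF : Integrable F (couplings x)) :
    Integrable (fun j => F (gaugeCouplings ep τ j) * exp (potential ep x j τ) *
      exp (-∑ c, x c * j c)) (couplings x) := by
  have h := hF.comp_mul_sign_mul_exp (bondSpin_sq ep τ)
  simp_rw [exp_sum_sub_mul_eq_exp_potential_mul, ← mul_assoc] at h
  exact h

variable [Fintype V] [DecidableEq V]

theorem card_mul_quenched (ep : ι → V × V) {x : ι → ℝ} {F : (ι → ℝ) → ℝ}
    (hF : Integrable F (couplings x)) :
    Fintype.card (V → Bool) * quenched x F =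
      ∫ j, (∑ τ, F (gaugeCouplings ep τ j) * exp (potential ep x j τ)) *
        exp (-∑ c, x c * j c) ∂couplings x := by
  simp_rw [Finset.sum_mul]
  rw [integral_finsetSum _ fun τ _ => hF.comp_gaugeCouplings ep τ, ← nsmul_eq_mul,
    ← Finset.card_univ, ← Finset.sum_const]
  exact Finset.sum_congr rfl fun τ _ => quenched_eq_integral_gaugeCouplings ep x τ F

theorem quenched_eq_of_sum_gaugeCouplings_eq (ep : ι → V × V) {x : ι → ℝ}
    {F G : (ι → ℝ) → ℝ} (hF : Integrable F (couplings x)) (hG : Integrable G (couplings x))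
    (h : ∀ j, ∑ τ, F (gaugeCouplings ep τ j) * exp (potential ep x j τ) =
      ∑ τ, G (gaugeCouplings ep τ j) * exp (potential ep x j τ)) :
    quenched x F = quenched x G := by
  refine mul_left_cancel₀ (Nat.cast_ne_zero.2 (Fintype.card_ne_zero (α := V → Bool))) ?_
  rw [card_mul_quenched ep hF, card_mul_quenched ep hG]
  simp_rw [h]

theorem sum_gaugeCouplings_mul_exp_potential (ep : ι → V × V) (x j : ι → ℝ)
    {F : (ι → ℝ) → ℝ} {g : (V → Bool) → ℝ}
    (hF : ∀ τ, F (gaugeCouplings ep τ j) = g τ * F j) :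
    ∑ τ, F (gaugeCouplings ep τ j) * exp (potential ep x j τ) =
      F j * gibbs ep x j g * partitionFn ep x j := by
  rw [mul_assoc, gibbs_mul_partitionFn, Finset.mul_sum]
  exact Finset.sum_congr rfl fun τ _ => by rw [hF]; ring

theorem quenched_eq_quenched_mul_gibbs_of_gaugeCovariant (ep : ι → V × V) {x : ι → ℝ}
    {F : (ι → ℝ) → ℝ} {g : (V → Bool) → ℝ} (hF : Integrable F (couplings x))
    (hFg : ∀ τ j, F (gaugeCouplings ep τ j) = g τ * F j)
    (hg : ∀ τ S, g (gaugeSpins τ S) = g τ * g S) (hg_sq : ∀ τ, g τ ^ 2 = 1) :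
    quenched x F = quenched x fun j => F j * gibbs ep x j g := by
  refine quenched_eq_of_sum_gaugeCouplings_eq ep hF (hF.mul_gibbs ep x g) fun j => ?_
  have hgj (τ : V → Bool) : gibbs ep x (gaugeCouplings ep τ j) g = g τ * gibbs ep x j g :=
    gibbs_gaugeCouplings_of_comp_eq_mul ep x j (hg τ)
  rw [sum_gaugeCouplings_mul_exp_potential ep x j (hFg · j),
    sum_gaugeCouplings_mul_exp_potential ep x j (F := fun j => F j * gibbs ep x j g)
      (g := fun _ => 1) fun τ => by
        rw [hFg, hgj]
        linear_combination (F j * gibbs ep x j g) * hg_sq τ,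
    gibbs_const, mul_one]

end Nishimori

theorem nishimori_triple_identity_general
    {V ι : Type*} [Fintype V] [DecidableEq V] [Fintype ι]
    (ep : ι → V × V)
    (x : ι → ℝ) (b b' : ι) :
    quenched x (fun j =>
        gibbs ep x j (fun S => bondSpin ep S b) * gibbs ep x j (fun S => bondSpin ep S b')) =
      quenched x (fun j =>
        gibbs ep x j (fun S => bondSpin ep S b) * gibbs ep x j (fun S => bondSpin ep S b') *
          gibbs ep x j (fun S => bondSpin ep S b * bondSpin ep S b')) := by
  refine quenched_eq_quenched_mul_gibbs_of_gaugeCovariant ep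
    ((integrable_gibbs ep x _ _).mul_gibbs ep x _) (fun τ j => ?_) (fun τ S => ?_) fun τ => ?_
  · rw [gibbs_bondSpin_gaugeCouplings, gibbs_bondSpin_gaugeCouplings]
    ring
  · rw [bondSpin_gaugeSpins, bondSpin_gaugeSpins]
    ring
  · rw [mul_pow, bondSpin_sq, bondSpin_sq, one_mul]

/-- Nishimori gauge identity for a triple product of correlations:
for all bonds `b, b'`, `[⟨S_b⟩⟨S_{b'}⟩] = [⟨S_b⟩⟨S_{b'}⟩⟨S_b S_{b'}⟩]`. -/
theorem nishimori_triple_identity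
    {V ι : Type*} [Fintype V] [DecidableEq V] [Fintype ι]
    (ep : ι → V × V) (hep : ∀ b, (ep b).1 ≠ (ep b).2)
    (x : ι → ℝ) (hx : ∀ b, 0 ≤ x b) (b b' : ι) :
    quenched x (fun j =>
        gibbs ep x j (fun S => bondSpin ep S b) * gibbs ep x j (fun S => bondSpin ep S b')) =
      quenched x (fun j =>
        gibbs ep x j (fun S => bondSpin ep S b) * gibbs ep x j (fun S => bondSpin ep S b') *
          gibbs ep x j (fun S => bondSpin ep S b * bondSpin ep S b')) :=
  nishimori_triple_identity_general ep x b b'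

end
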